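/- Let V : B_R × [t₀ - θR², t₀] → ℝ≥0 be measurable, k > 0, δ₁ > 0, and suppose meas({x ∈ B_R : V(x,t) ≥ k·2^{-(m+1)}}) ≥ δ₁·meas(B_R) for every t in the time interval and every m ≥ 0 (implied by meas({V(·,t) ≥ k₀}∩B_R) ≥ δ₁ meas(B_R) with k₀ = k). Suppose moreover there is a constant C₁₄ such that for each m ≥ 0, ∫∫ over the space-time cylinder of |DV|² restricted to {V < k·2^{-m}} is at most C₁₄·(k·2^{-m})²·Rⁿ, and the De Giorgi isoperimetric inequality (k_m - k_{m+1})·meas({V(·,t) < k_{m+1}} ∩ B_R) ≤ C(n)·R/δ₁ · ∫_{{k_{m+1} ≤ V(·,t) < k_m}} |DV(·,t)| dx holds for each t. Then for every μ ∈ (0,1) there exists an integer s ≥ 1, depending only on n, C₁₄, δ₁, θ, μ, such that meas({V < 2^{-s} k} ∩ (B_R × [t₀-θR², t₀])) ≤ μ · meas(B_R × [t₀-θR², t₀]). -/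

import Mathlib

/-!
Write `k_m = 2⁻ᵐ k`, `S_m = Q ∩ {V < k_m}` and `E_m = Q ∩ {k_{m+1} ≤ V < k_m}`. Integrating the
slice-wise De Giorgi inequality in time, then applying Cauchy–Schwarz on `E_m` and the energy bound
on `S_m ⊇ E_m`, gives `|S_{m+1}|² ≤ K |E_m|` with `K` independent of `m`: both sides scale like
`k_m²`. The `E_m` are disjoint subsets of `Q` and `S_m` decreases, so summing over `m < s` yields
`s |S_s|² ≤ K |Q|`, which is `≤ s (μ |Q|)²` once `s` is large.
-/

open MeasureTheory Metric Set

open scoped ENNReal Function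

section LevelSetDecay

variable {γ : Type*} [MeasurableSpace γ] {ν : Measure γ}

theorem natCast_mul_sq_measure_le {S E : ℕ → Set γ} {Q : Set γ} {K : ℝ≥0∞}
    (hS : Antitone S) (hE : Pairwise (Disjoint on E)) (hEm : ∀ m, MeasurableSet (E m))
    (hEQ : ∀ m, E m ⊆ Q) (hrec : ∀ m, ν (S (m + 1)) ^ 2 ≤ K * ν (E m)) (s : ℕ) :
    s * ν (S s) ^ 2 ≤ K * ν Q :=
  calc (s : ℝ≥0∞) * ν (S s) ^ 2 = ∑ _m ∈ Finset.range s, ν (S s) ^ 2 := by simp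
    _ ≤ ∑ m ∈ Finset.range s, K * ν (E m) := Finset.sum_le_sum fun m hm =>
        (pow_le_pow_left' (measure_mono (hS (Finset.mem_range.1 hm))) 2).trans (hrec m)
    _ = K * ν (⋃ m ∈ Finset.range s, E m) := by
        rw [measure_biUnion_finset (hE.set_pairwise _) fun m _ => hEm m, Finset.mul_sum]
    _ ≤ K * ν Q := by gcongr; exact iUnion₂_subset fun m _ => hEQ m

theorem ENNReal.exists_le_mul_of_natCast_mul_sq_le {x : ℕ → ℝ≥0∞} {K q ε : ℝ≥0∞}
    (hK : K ≠ ∞) (hq : q ≠ ∞) (hε : ε ≠ 0) (hx : ∀ s : ℕ, s * x s ^ 2 ≤ K * q) :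
    ∃ s : ℕ, 1 ≤ s ∧ x s ≤ ε * q := by
  rcases eq_or_ne q 0 with rfl | hq0
  · exact ⟨1, le_rfl, by simpa using hx 1⟩
  have hεq : (ε * q) ^ 2 ≠ 0 := pow_ne_zero 2 (mul_ne_zero hε hq0)
  obtain ⟨N, hN⟩ := ENNReal.exists_nat_gt (ENNReal.div_ne_top (mul_ne_top hK hq) hεq)
  rw [ENNReal.div_lt_iff (.inl hεq) (.inr (mul_ne_top hK hq))] at hN
  refine ⟨N + 1, by omega, ?_⟩
  rw [← ENNReal.pow_le_pow_left_iff two_ne_zero]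
  refine (ENNReal.mul_le_mul_iff_right (a := ((N + 1 : ℕ) : ℝ≥0∞)) (by positivity)
    (natCast_ne_top _)).1 ?_
  calc ((N + 1 : ℕ) : ℝ≥0∞) * x (N + 1) ^ 2 ≤ K * q := hx _
    _ ≤ N * (ε * q) ^ 2 := hN.le
    _ ≤ ((N + 1 : ℕ) : ℝ≥0∞) * (ε * q) ^ 2 := by gcongr; omega

end LevelSetDecay

section Slicing

variable {α β : Type*} [MeasurableSpace α] [MeasurableSpace β] {μ : Measure α} {ν : Measure β}

theorem ofReal_mul_measure_le_of_le_mul_setIntegral {s D : Set α} {f : α → ℝ} {a C : ℝ}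
    (ha : 0 ≤ a) (hs : μ s ≠ ∞) (hf0 : 0 ≤ᵐ[μ.restrict D] f)
    (hfm : AEStronglyMeasurable f (μ.restrict D))
    (h : a * (μ s).toReal ≤ C * ∫ x in D, f x ∂μ) :
    ENNReal.ofReal a * μ s ≤ ENNReal.ofReal C * ∫⁻ x in D, ENNReal.ofReal (f x) ∂μ :=
  calc ENNReal.ofReal a * μ s = ENNReal.ofReal (a * (μ s).toReal) := by
        rw [ENNReal.ofReal_mul ha, ENNReal.ofReal_toReal hs]
    _ ≤ ENNReal.ofReal (C * ∫ x in D, f x ∂μ) := ENNReal.ofReal_le_ofReal h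
    _ = ENNReal.ofReal C * ENNReal.ofReal (∫ x in D, f x ∂μ) :=
        ENNReal.ofReal_mul' (integral_nonneg_of_ae hf0)
    _ ≤ ENNReal.ofReal C * ∫⁻ x in D, ENNReal.ofReal (f x) ∂μ := by
        rw [integral_eq_lintegral_of_nonneg_ae hf0 hfm]
        gcongr
        exact ENNReal.ofReal_toReal_le

theorem sq_lintegral_le_measure_univ_mul_lintegral_sq {f : α → ℝ≥0∞} (hf : AEMeasurable f μ) :
    (∫⁻ x, f x ∂μ) ^ 2 ≤ μ univ * ∫⁻ x, f x ^ 2 ∂μ := by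
  have hCS := ENNReal.lintegral_mul_le_Lp_mul_Lq μ Real.HolderConjugate.two_two hf
    (aemeasurable_const (b := (1 : ℝ≥0∞)))
  simp only [Pi.mul_apply, mul_one, lintegral_const, ENNReal.rpow_two, one_pow, one_mul] at hCS
  rw [← ENNReal.mul_rpow_of_nonneg _ _ (by norm_num), mul_comm] at hCS
  calc (∫⁻ x, f x ∂μ) ^ 2 ≤ (((μ univ * ∫⁻ x, f x ^ 2 ∂μ)) ^ (1 / 2 : ℝ)) ^ 2 := by gcongr
    _ = μ univ * ∫⁻ x, f x ^ 2 ∂μ := by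
        rw [← ENNReal.rpow_natCast, ← ENNReal.rpow_mul]; norm_num

variable [SFinite μ] [SFinite ν]

theorem mul_measure_prod_le_mul_setLIntegral_of_slices {A D : Set (α × β)}
    (hA : MeasurableSet A) (hD : MeasurableSet D) {f : α × β → ℝ≥0∞} (hf : Measurable f)
    {a c : ℝ≥0∞} (h : ∀ t, a * μ ((fun x => (x, t)) ⁻¹' A) ≤
      c * ∫⁻ x in (fun x => (x, t)) ⁻¹' D, f (x, t) ∂μ) :
    a * μ.prod ν A ≤ c * ∫⁻ p in D, f p ∂μ.prod ν := by
  rw [Measure.prod_apply_symm hA, ← lintegral_const_mul _ (measurable_measure_prodMk_right hA),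
    ← lintegral_indicator hD, lintegral_prod_symm' _ (hf.indicator hD),
    ← lintegral_const_mul _ (hf.indicator hD).lintegral_prod_left']
  refine lintegral_mono fun t => (h t).trans_eq ?_
  rw [← lintegral_indicator (measurable_prodMk_right hD)]
  rfl

theorem sq_measure_sublevel_le_mul_measure_layer {B : Set α} {I : Set β} (hB : MeasurableSet B)
    (hI : MeasurableSet I) (hBfin : μ B ≠ ∞) {V g : α × β → ℝ} (hV : Measurable V)
    (hg : Measurable g) (hg0 : ∀ p, 0 ≤ g p) {a b C M : ℝ} (ha : 0 < a)
    (hDG : ∀ t ∈ I, a * (μ {x ∈ B | V (x, t) < a}).toReal ≤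
      C * ∫ x in {x ∈ B | a ≤ V (x, t) ∧ V (x, t) < b}, g (x, t) ∂μ)
    (henergy : ∫⁻ p in (B ×ˢ I) ∩ {p | V p < b}, ENNReal.ofReal (g p ^ 2) ∂μ.prod ν ≤
      ENNReal.ofReal (M * a ^ 2)) :
    μ.prod ν ((B ×ˢ I) ∩ {p | V p < a}) ^ 2 ≤
      ENNReal.ofReal C ^ 2 * ENNReal.ofReal M *
        μ.prod ν ((B ×ˢ I) ∩ {p | a ≤ V p ∧ V p < b}) := by
  set E := (B ×ˢ I) ∩ {p | a ≤ V p ∧ V p < b}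
  have hE : MeasurableSet E := (hB.prod hI).inter
    ((measurableSet_le measurable_const hV).inter (measurableSet_lt hV measurable_const))
  have hslices : ENNReal.ofReal a * μ.prod ν ((B ×ˢ I) ∩ {p | V p < a}) ≤
      ENNReal.ofReal C * ∫⁻ p in E, ENNReal.ofReal (g p) ∂μ.prod ν := by
    refine mul_measure_prod_le_mul_setLIntegral_of_slices
      ((hB.prod hI).inter (measurableSet_lt hV measurable_const)) hE hg.ennreal_ofReal fun t => ?_
    by_cases ht : t ∈ I
    · have hA : (fun x => (x, t)) ⁻¹' ((B ×ˢ I) ∩ {p | V p < a}) = {x ∈ B | V (x, t) < a} := by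
        ext x; simp only [mem_preimage, mem_inter_iff, mem_prod, ht, and_true, mem_ofPred_eq]
      have hD : (fun x => (x, t)) ⁻¹' E = {x ∈ B | a ≤ V (x, t) ∧ V (x, t) < b} := by
        ext x; simp only [E, mem_preimage, mem_inter_iff, mem_prod, ht, and_true, mem_ofPred_eq]
      rw [hA, hD]
      exact ofReal_mul_measure_le_of_le_mul_setIntegral ha.le
        ((measure_mono (sep_subset _ _)).trans_lt hBfin.lt_top).ne (ae_of_all _ fun x => hg0 _)
        (hg.comp measurable_prodMk_right).aestronglyMeasurable (hDG t ht)
    · simp [ht]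
  have hCS : (∫⁻ p in E, ENNReal.ofReal (g p) ∂μ.prod ν) ^ 2 ≤
      μ.prod ν E * ENNReal.ofReal (M * a ^ 2) := by
    refine (sq_lintegral_le_measure_univ_mul_lintegral_sq hg.ennreal_ofReal.aemeasurable).trans ?_
    simp_rw [ENNReal.ofReal_pow (hg0 _)] at henergy
    rw [Measure.restrict_apply_univ]
    gcongr
    exact (lintegral_mono_set (inter_subset_inter_right _ fun p hp => hp.2)).trans henergy
  refine (ENNReal.mul_le_mul_iff_right (a := ENNReal.ofReal a ^ 2)
    (by positivity) (by simp)).1 ?_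
  calc ENNReal.ofReal a ^ 2 * μ.prod ν ((B ×ˢ I) ∩ {p | V p < a}) ^ 2
      = (ENNReal.ofReal a * μ.prod ν ((B ×ˢ I) ∩ {p | V p < a})) ^ 2 := (mul_pow _ _ _).symm
    _ ≤ ENNReal.ofReal C ^ 2 * (∫⁻ p in E, ENNReal.ofReal (g p) ∂μ.prod ν) ^ 2 := by
        rw [← mul_pow]; gcongr
    _ ≤ ENNReal.ofReal C ^ 2 * (μ.prod ν E * ENNReal.ofReal (M * a ^ 2)) := by gcongr
    _ = ENNReal.ofReal a ^ 2 * (ENNReal.ofReal C ^ 2 * ENNReal.ofReal M * μ.prod ν E) := by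
        rw [ENNReal.ofReal_mul' (sq_nonneg a), ENNReal.ofReal_pow ha.le]; ring

end Slicing

theorem stmt_11_general (n : ℕ)
    (V g : EuclideanSpace ℝ (Fin n) × ℝ → ℝ)
    (hV : Measurable V) (hg : Measurable g) (hgnn : ∀ p, 0 ≤ g p)
    (R θ t₀ k δ₁ C₁₄ Cn : ℝ) (hk : 0 < k)
    -- Caccioppoli-type energy bound on each truncation level
    (henergy : ∀ m : ℕ,
      (∫⁻ p in (ball (0 : EuclideanSpace ℝ (Fin n)) R ×ˢ Icc (t₀ - θ * R ^ 2) t₀) ∩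
          {p | V p < k * (1 / 2) ^ m}, ENNReal.ofReal ((g p) ^ 2)) ≤
        ENNReal.ofReal (C₁₄ * (k * (1 / 2) ^ m) ^ 2 * R ^ (n : ℝ)))
    -- De Giorgi isoperimetric inequality at each time slice and level
    (hDG : ∀ t ∈ Icc (t₀ - θ * R ^ 2) t₀, ∀ m : ℕ,
      (k * (1 / 2) ^ m - k * (1 / 2) ^ (m + 1)) *
          (volume {x ∈ ball (0 : EuclideanSpace ℝ (Fin n)) R |
            V (x, t) < k * (1 / 2) ^ (m + 1)}).toReal ≤
        Cn * R / δ₁ *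
          ∫ x in {x ∈ ball (0 : EuclideanSpace ℝ (Fin n)) R |
            k * (1 / 2) ^ (m + 1) ≤ V (x, t) ∧ V (x, t) < k * (1 / 2) ^ m}, g (x, t)) :
    ∀ μ : ℝ, 0 < μ → μ < 1 → ∃ s : ℕ, 1 ≤ s ∧
      volume ((ball (0 : EuclideanSpace ℝ (Fin n)) R ×ˢ Icc (t₀ - θ * R ^ 2) t₀) ∩
          {p | V p < (1 / 2) ^ s * k}) ≤
        ENNReal.ofReal μ *
          volume (ball (0 : EuclideanSpace ℝ (Fin n)) R ×ˢ Icc (t₀ - θ * R ^ 2) t₀) := by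
  intro μ hμ _
  set Q := ball (0 : EuclideanSpace ℝ (Fin n)) R ×ˢ Icc (t₀ - θ * R ^ 2) t₀
  have hQ : MeasurableSet Q := measurableSet_ball.prod measurableSet_Icc
  have hQfin : volume Q ≠ ∞ := by
    rw [Measure.volume_eq_prod, Measure.prod_prod]
    exact ENNReal.mul_ne_top measure_ball_lt_top.ne (by simp)
  have hlevels : Antitone fun m : ℕ => k * (1 / 2) ^ m :=
    (pow_right_anti₀ (by norm_num) (by norm_num)).const_mul hk.le
  -- The factor `4` is `(k_m / k_{m+1})²`.
  have hrec : ∀ m : ℕ, volume (Q ∩ {p | V p < k * (1 / 2) ^ (m + 1)}) ^ 2 ≤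
      ENNReal.ofReal (Cn * R / δ₁) ^ 2 * ENNReal.ofReal (4 * C₁₄ * R ^ (n : ℝ)) *
        volume (Q ∩ {p | k * (1 / 2) ^ (m + 1) ≤ V p ∧ V p < k * (1 / 2) ^ m}) := fun m => by
    rw [Measure.volume_eq_prod] at henergy ⊢
    refine sq_measure_sublevel_le_mul_measure_layer measurableSet_ball measurableSet_Icc
      measure_ball_lt_top.ne hV hg hgnn (by positivity) (fun t ht => ?_) ?_
    · simpa only [show k * (1 / 2) ^ m - k * (1 / 2) ^ (m + 1) = k * (1 / 2) ^ (m + 1) by ring]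
        using hDG t ht m
    · convert henergy m using 2; ring
  obtain ⟨s, hs, hsQ⟩ := ENNReal.exists_le_mul_of_natCast_mul_sq_le (by finiteness) hQfin
    (ENNReal.ofReal_pos.2 hμ).ne' (natCast_mul_sq_measure_le
      (S := fun m => Q ∩ {p | V p < k * (1 / 2) ^ m})
      (E := fun m => Q ∩ {p | k * (1 / 2) ^ (m + 1) ≤ V p ∧ V p < k * (1 / 2) ^ m})
      (fun i j hij => inter_subset_inter_right _ fun p hp => hp.trans_le (hlevels hij))
      (fun i j hij => ((hlevels.pairwise_disjoint_on_Ico_succ hij).preimage V).mono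
        inter_subset_right inter_subset_right)
      (fun m => hQ.inter (hV measurableSet_Ico)) (fun m => inter_subset_left) hrec)
  exact ⟨s, hs, by rwa [mul_comm]⟩

/-- Measure-decay argument of Lemma 3.3 (De Giorgi iteration in measure). -/
theorem stmt_11 (n : ℕ) (hn : 1 ≤ n)
    (V g : EuclideanSpace ℝ (Fin n) × ℝ → ℝ)
    (hV : Measurable V) (hg : Measurable g) (hgnn : ∀ p, 0 ≤ g p)
    (hVnn : ∀ p, 0 ≤ V p)
    (R θ t₀ k δ₁ C₁₄ Cn : ℝ) (hR : 0 < R) (hθ : 0 < θ) (hk : 0 < k)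
    (hδ₁ : 0 < δ₁) (hC₁₄ : 0 < C₁₄) (hCn : 0 < Cn)
    -- superlevel sets keep a fixed measure fraction at every time and level
    (hlevel : ∀ t ∈ Icc (t₀ - θ * R ^ 2) t₀, ∀ m : ℕ,
      ENNReal.ofReal δ₁ * volume (ball (0 : EuclideanSpace ℝ (Fin n)) R) ≤
        volume {x ∈ ball (0 : EuclideanSpace ℝ (Fin n)) R |
          k * (1 / 2) ^ (m + 1) ≤ V (x, t)})
    -- Caccioppoli-type energy bound on each truncation level
    (henergy : ∀ m : ℕ,
      (∫⁻ p in (ball (0 : EuclideanSpace ℝ (Fin n)) R ×ˢ Icc (t₀ - θ * R ^ 2) t₀) ∩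
          {p | V p < k * (1 / 2) ^ m}, ENNReal.ofReal ((g p) ^ 2)) ≤
        ENNReal.ofReal (C₁₄ * (k * (1 / 2) ^ m) ^ 2 * R ^ (n : ℝ)))
    -- De Giorgi isoperimetric inequality at each time slice and level
    (hDG : ∀ t ∈ Icc (t₀ - θ * R ^ 2) t₀, ∀ m : ℕ,
      (k * (1 / 2) ^ m - k * (1 / 2) ^ (m + 1)) *
          (volume {x ∈ ball (0 : EuclideanSpace ℝ (Fin n)) R |
            V (x, t) < k * (1 / 2) ^ (m + 1)}).toReal ≤
        Cn * R / δ₁ *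
          ∫ x in {x ∈ ball (0 : EuclideanSpace ℝ (Fin n)) R |
            k * (1 / 2) ^ (m + 1) ≤ V (x, t) ∧ V (x, t) < k * (1 / 2) ^ m}, g (x, t)) :
    ∀ μ : ℝ, 0 < μ → μ < 1 → ∃ s : ℕ, 1 ≤ s ∧
      volume ((ball (0 : EuclideanSpace ℝ (Fin n)) R ×ˢ Icc (t₀ - θ * R ^ 2) t₀) ∩
          {p | V p < (1 / 2) ^ s * k}) ≤
        ENNReal.ofReal μ *
          volume (ball (0 : EuclideanSpace ℝ (Fin n)) R ×ˢ Icc (t₀ - θ * R ^ 2) t₀) :=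
  stmt_11_general n V g hV hg hgnn R θ t₀ k δ₁ C₁₄ Cn hk henergy hDG
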